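/- Let T be the volume-based quadtree of a λ-Lipschitz function f : D → ℝ≥0 with threshold ρ, and let f_T be the step function taking on each leaf cell the average of f over the cell. Then for every leaf cell v and all (x,y) ∈ R(v): |f(x,y) - f_T(x,y)| ≤ min((2√2/3)·λ·s(v), ∛(6λ²ρ)). -/

import Mathlib

/-!
On a square `Q` of side `t` containing `q`, the sup-norm distance obeys
`‖p - q‖ ≤ t - (t - u) (t - v) / t`, where `u, v` are the coordinate distances from `p` to `q`.
The product on the right separates the variables, and each factor integrates to at least `t² / 2`,
so `∫_Q ‖p - q‖ ≤ 3 t³ / 4`; hence `|∫_Q f - t² f(q)| ≤ (3/4) λ t³` for `f` Lipschitz at `q`.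
Taking `Q = R` bounds the deviation `z` of `f(q)` from the mean by `(3/4) λ s ≤ (2√2/3) λ s`.
If `f(q)` lies above the mean, the sub-square of side `t = z / λ` through `q` already carries
mass `t² z - (3/4) λ t³ = z³ / (4 λ²) ≤ ρ`; if it lies below, `z ≤ ρ / s²` and `z ≤ λ s`
give `z³ ≤ λ² ρ`.
-/

open MeasureTheory Set

theorem abs_setIntegral_sub_le {X : Type*} [MeasurableSpace X] {μ : Measure X} {S : Set X}
    {f g : X → ℝ} {c : ℝ} (hS : MeasurableSet S) (hμS : μ S ≠ ⊤) (hf : IntegrableOn f S μ)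
    (hg : IntegrableOn g S μ) (hfg : ∀ x ∈ S, |f x - c| ≤ g x) :
    |∫ x in S, f x ∂μ - μ.real S * c| ≤ ∫ x in S, g x ∂μ := by
  rw [← smul_eq_mul, ← setIntegral_const, ← integral_sub hf (integrableOn_const hμS),
    ← Real.norm_eq_abs]
  exact norm_integral_le_of_norm_le hg ((ae_restrict_iff' hS).2 (.of_forall hfg))

theorem exists_Icc_add_subset_Icc {α : Type*} [AddCommGroup α] [Lattice α]
    [IsOrderedAddMonoid α] {a S T q : α} (hq : q ∈ Icc a (a + S)) (hT : 0 ≤ T) (hTS : T ≤ S) :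
    ∃ b, q ∈ Icc b (b + T) ∧ Icc b (b + T) ⊆ Icc a (a + S) := by
  refine ⟨a ⊔ (q - T), ⟨sup_le hq.1 (sub_le_self q hT), ?_⟩, Icc_subset_Icc le_sup_left ?_⟩
  · calc q = q - T + T := (sub_add_cancel q T).symm
      _ ≤ a ⊔ (q - T) + T := add_le_add_left le_sup_right T
  · rw [sup_add, sub_add_cancel]
    exact sup_le (add_le_add_right hTS a) hq.2

theorem integral_Icc_abs_sub {α β c : ℝ} (hαc : α ≤ c) (hcβ : c ≤ β) :
    ∫ x in Icc α β, |x - c| = ((c - α) ^ 2 + (β - c) ^ 2) / 2 := by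
  have hint (u v : ℝ) : IntervalIntegrable (fun x => |x - c|) volume u v :=
    (continuous_id.sub continuous_const).abs.intervalIntegrable u v
  have left : ∫ x in α..c, |x - c| = ∫ x in α..c, (c - x) :=
    intervalIntegral.integral_congr fun x hx => by
      rw [uIcc_of_le hαc] at hx
      simp only [abs_of_nonpos (sub_nonpos.2 hx.2), neg_sub]
  have right : ∫ x in c..β, |x - c| = ∫ x in c..β, (x - c) :=
    intervalIntegral.integral_congr fun x hx => by
      rw [uIcc_of_le hcβ] at hx
      simp only [abs_of_nonneg (sub_nonneg.2 hx.1)]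
  rw [integral_Icc_eq_integral_Ioc, ← intervalIntegral.integral_of_le (hαc.trans hcβ),
    ← intervalIntegral.integral_add_adjacent_intervals (hint α c) (hint c β), left, right,
    intervalIntegral.integral_comp_sub_left (fun x => x),
    intervalIntegral.integral_comp_sub_right (fun x => x)]
  simp only [integral_id]
  ring

theorem half_sq_le_integral_Icc_sub_abs_sub {α t c : ℝ} (hc : c ∈ Icc α (α + t)) :
    t ^ 2 / 2 ≤ ∫ x in Icc α (α + t), (t - |x - c|) := by
  have hint : IntegrableOn (fun x => |x - c|) (Icc α (α + t)) :=
    (continuous_id.sub continuous_const).abs.integrableOn_Icc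
  rw [integral_sub continuous_const.integrableOn_Icc hint, setIntegral_const,
    Real.volume_real_Icc_of_le (hc.1.trans hc.2), smul_eq_mul, add_sub_cancel_left,
    integral_Icc_abs_sub hc.1 hc.2]
  nlinarith [mul_nonneg (sub_nonneg.2 hc.1) (sub_nonneg.2 hc.2)]

theorem max_le_sub_mul_div {u v t : ℝ} (hu : u ∈ Icc 0 t) (hv : v ∈ Icc 0 t) (ht : 0 < t) :
    max u v ≤ t - (t - u) * (t - v) / t := by
  have hmin : u * v / t ≤ min u v := by
    rw [div_le_iff₀ ht]
    rcases le_total u v with h | h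
    · rw [min_eq_left h]; nlinarith [hu.1, hv.2]
    · rw [min_eq_right h]; nlinarith [hv.1, hu.2]
  have expand : t - (t - u) * (t - v) / t = u + v - u * v / t := by field_simp; ring
  rw [expand]
  linarith [max_add_min u v]

theorem volume_real_Icc_add_mk {b : ℝ × ℝ} {t : ℝ} (ht : 0 ≤ t) :
    volume.real (Icc b (b + (t, t))) = t ^ 2 := by
  rw [Icc_prod_eq, Measure.volume_eq_prod, measureReal_prod_prod]
  simp [ht, sq]

theorem setIntegral_Icc_norm_sub_le {b q : ℝ × ℝ} {t : ℝ} (ht : 0 < t)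
    (hq : q ∈ Icc b (b + (t, t))) :
    ∫ p in Icc b (b + (t, t)), ‖p - q‖ ≤ 3 / 4 * t ^ 3 := by
  set g : ℝ → ℝ := fun x => t - |x - q.1|
  set h : ℝ → ℝ := fun y => t - |y - q.2|
  have hQ : Icc b (b + (t, t)) = Icc b.1 (b.1 + t) ×ˢ Icc b.2 (b.2 + t) := Icc_prod_eq _ _
  have hq' : q.1 ∈ Icc b.1 (b.1 + t) ∧ q.2 ∈ Icc b.2 (b.2 + t) := by
    rw [hQ] at hq; exact hq
  have hg : t ^ 2 / 2 ≤ ∫ x in Icc b.1 (b.1 + t), g x := half_sq_le_integral_Icc_sub_abs_sub hq'.1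
  have hh : t ^ 2 / 2 ≤ ∫ y in Icc b.2 (b.2 + t), h y := half_sq_le_integral_Icc_sub_abs_sub hq'.2
  have hgh : ∫ p in Icc b (b + (t, t)), g p.1 * h p.2 =
      (∫ x in Icc b.1 (b.1 + t), g x) * ∫ y in Icc b.2 (b.2 + t), h y := by
    rw [hQ, Measure.volume_eq_prod]
    exact setIntegral_prod_mul g h _ _
  have hcont : Continuous fun p : ℝ × ℝ => g p.1 * h p.2 := by fun_prop
  have hnorm : Continuous fun p : ℝ × ℝ => ‖p - q‖ := by fun_prop
  have hGH : t ^ 3 / 4 ≤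
      (∫ x in Icc b.1 (b.1 + t), g x) * (∫ y in Icc b.2 (b.2 + t), h y) / t := by
    rw [le_div_iff₀ ht]
    nlinarith [mul_le_mul hg hh (by positivity) (by linarith [sq_nonneg t])]
  calc ∫ p in Icc b (b + (t, t)), ‖p - q‖
      ≤ ∫ p in Icc b (b + (t, t)), (t - g p.1 * h p.2 / t) := by
        refine setIntegral_mono_on hnorm.integrableOn_Icc
          (continuous_const.sub (hcont.div_const t)).integrableOn_Icc measurableSet_Icc
          fun p hp => ?_
        rw [hQ] at hp
        have hu : |p.1 - q.1| ∈ Icc 0 t :=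
          ⟨abs_nonneg _, by simpa [Real.dist_eq] using Real.dist_le_of_mem_Icc hp.1 hq'.1⟩
        have hv : |p.2 - q.2| ∈ Icc 0 t :=
          ⟨abs_nonneg _, by simpa [Real.dist_eq] using Real.dist_le_of_mem_Icc hp.2 hq'.2⟩
        simpa [Prod.norm_def] using max_le_sub_mul_div hu hv ht
    _ = t ^ 2 * t - (∫ x in Icc b.1 (b.1 + t), g x) * (∫ y in Icc b.2 (b.2 + t), h y) / t := by
        rw [integral_sub continuous_const.integrableOn_Icc (hcont.div_const t).integrableOn_Icc,
          integral_div, hgh, setIntegral_const, volume_real_Icc_add_mk ht.le, smul_eq_mul]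
    _ ≤ 3 / 4 * t ^ 3 := by linarith

section LipschitzAtCenter

variable {f : ℝ × ℝ → ℝ} {q : ℝ × ℝ} {lam : ℝ}

theorem abs_setIntegral_Icc_sub_le {b : ℝ × ℝ} {t : ℝ} (ht : 0 < t) (hlam : 0 ≤ lam)
    (hq : q ∈ Icc b (b + (t, t))) (hf : IntegrableOn f (Icc b (b + (t, t))))
    (hlip : ∀ p ∈ Icc b (b + (t, t)), |f p - f q| ≤ lam * ‖p - q‖) :
    |(∫ p in Icc b (b + (t, t)), f p) - t ^ 2 * f q| ≤ 3 / 4 * lam * t ^ 3 := by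
  have h := abs_setIntegral_sub_le measurableSet_Icc measure_Icc_lt_top.ne hf
    (by fun_prop : Continuous fun p : ℝ × ℝ => lam * ‖p - q‖).integrableOn_Icc hlip
  rw [volume_real_Icc_add_mk ht.le, integral_const_mul] at h
  calc _ ≤ lam * ∫ p in Icc b (b + (t, t)), ‖p - q‖ := h
    _ ≤ lam * (3 / 4 * t ^ 3) := by gcongr; exact setIntegral_Icc_norm_sub_le ht hq
    _ = 3 / 4 * lam * t ^ 3 := by ring

theorem abs_sub_setIntegral_Icc_div_sq_le {b : ℝ × ℝ} {t : ℝ} (ht : 0 < t) (hlam : 0 ≤ lam)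
    (hq : q ∈ Icc b (b + (t, t))) (hf : IntegrableOn f (Icc b (b + (t, t))))
    (hlip : ∀ p ∈ Icc b (b + (t, t)), |f p - f q| ≤ lam * ‖p - q‖) :
    |f q - (∫ p in Icc b (b + (t, t)), f p) / t ^ 2| ≤ 3 / 4 * lam * t := by
  have ht2 : 0 < t ^ 2 := by positivity
  have hdiv : (∫ p in Icc b (b + (t, t)), f p) / t ^ 2 - f q =
      ((∫ p in Icc b (b + (t, t)), f p) - t ^ 2 * f q) / t ^ 2 := by field_simp
  rw [abs_sub_comm, hdiv, abs_div, abs_of_pos ht2, div_le_iff₀ ht2]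
  linarith [abs_setIntegral_Icc_sub_le ht hlam hq hf hlip]

theorem sq_mul_sub_le_setIntegral_Icc {a : ℝ × ℝ} {s t : ℝ} (ht : 0 < t) (hts : t ≤ s)
    (hlam : 0 ≤ lam) (hq : q ∈ Icc a (a + (s, s))) (hf0 : ∀ p ∈ Icc a (a + (s, s)), 0 ≤ f p)
    (hf : IntegrableOn f (Icc a (a + (s, s))))
    (hlip : ∀ p ∈ Icc a (a + (s, s)), |f p - f q| ≤ lam * ‖p - q‖) :
    t ^ 2 * f q - 3 / 4 * lam * t ^ 3 ≤ ∫ p in Icc a (a + (s, s)), f p := by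
  obtain ⟨b, hqb, hsub⟩ := exists_Icc_add_subset_Icc hq (T := (t, t))
    (Prod.mk_le_mk.2 ⟨ht.le, ht.le⟩) (Prod.mk_le_mk.2 ⟨hts, hts⟩)
  have hsquare := abs_setIntegral_Icc_sub_le ht hlam hqb (hf.mono_set hsub)
    fun p hp => hlip p (hsub hp)
  have hmono : ∫ p in Icc b (b + (t, t)), f p ≤ ∫ p in Icc a (a + (s, s)), f p :=
    setIntegral_mono_set hf ((ae_restrict_iff' measurableSet_Icc).2 (.of_forall hf0))
      hsub.eventuallyLE
  linarith [neg_abs_le ((∫ p in Icc b (b + (t, t)), f p) - t ^ 2 * f q)]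

end LipschitzAtCenter

theorem pow_three_le_of_mul_sq_le {lam s z ρ : ℝ} (hz : 0 ≤ z) (hzs : z ≤ lam * s)
    (h : z * s ^ 2 ≤ ρ) : z ^ 3 ≤ lam ^ 2 * ρ :=
  calc z ^ 3 = z * z ^ 2 := by ring
    _ ≤ z * (lam * s) ^ 2 := by gcongr
    _ = lam ^ 2 * (z * s ^ 2) := by ring
    _ ≤ lam ^ 2 * ρ := by gcongr

theorem pow_three_le_of_forall_sq_mul_sub_le {lam s z ρ : ℝ} (hlam : 0 < lam) (hz : 0 < z)
    (hzs : z ≤ lam * s) (h : ∀ t, 0 < t → t ≤ s → t ^ 2 * z - 3 / 4 * lam * t ^ 3 ≤ ρ) :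
    z ^ 3 ≤ 4 * lam ^ 2 * ρ := by
  have ht := h (z / lam) (by positivity) (by rwa [div_le_iff₀' hlam])
  have hval : (z / lam) ^ 2 * z - 3 / 4 * lam * (z / lam) ^ 3 = z ^ 3 / (4 * lam ^ 2) := by
    field_simp
    ring
  rwa [hval, div_le_iff₀' (by positivity)] at ht

theorem pow_three_abs_sub_div_sq_le {lam s c I ρ : ℝ} (hlam : 0 < lam) (hs : 0 < s)
    (hc : 0 ≤ c) (hI : 0 ≤ I) (hIρ : I ≤ ρ) (hdev : |c - I / s ^ 2| ≤ lam * s)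
    (hsub : ∀ t, 0 < t → t ≤ s → t ^ 2 * c - 3 / 4 * lam * t ^ 3 ≤ I) :
    |c - I / s ^ 2| ^ 3 ≤ 4 * lam ^ 2 * ρ := by
  rcases le_or_gt (c - I / s ^ 2) 0 with hle | hlt
  · rw [abs_of_nonpos hle] at hdev ⊢
    have hbelow : -(c - I / s ^ 2) * s ^ 2 ≤ ρ :=
      calc _ ≤ I / s ^ 2 * s ^ 2 := by gcongr; linarith
        _ = I := div_mul_cancel₀ I (by positivity)
        _ ≤ ρ := hIρ
    have hρ : 0 ≤ lam ^ 2 * ρ := by have := hI.trans hIρ; positivity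
    linarith [pow_three_le_of_mul_sq_le (neg_nonneg.2 hle) hdev hbelow]
  · rw [abs_of_pos hlt] at hdev ⊢
    refine pow_three_le_of_forall_sq_mul_sub_le hlam hlt hdev fun t ht hts => ?_
    have hmean : t ^ 2 * (c - I / s ^ 2) ≤ t ^ 2 * c := by
      gcongr
      linarith [div_nonneg hI (sq_nonneg s)]
    linarith [hsub t ht hts]

theorem quadtree_cell_error_bound_general
    (lam s ρ : ℝ) (f : ℝ × ℝ → ℝ) (a q : ℝ × ℝ)
    (hlam : 0 < lam) (hs : 0 < s)
    (R : Set (ℝ × ℝ)) (hR : R = Set.Icc a (a + (s, s)))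
    (hf0 : ∀ p ∈ R, 0 ≤ f p)
    (hlip : ∀ p ∈ R, ∀ p' ∈ R, |f p - f p'| ≤ lam * ‖p - p'‖)
    (hint : IntegrableOn f R)
    (hleaf : (∫ p in R, f p) ≤ ρ)
    (hq : q ∈ R) :
    |f q - (∫ p in R, f p) / s ^ 2| ≤
      min ((2 * Real.sqrt 2 / 3) * lam * s) ((6 * lam ^ 2 * ρ) ^ ((1:ℝ)/3)) := by
  subst hR
  have hlipq : ∀ p ∈ Icc a (a + (s, s)), |f p - f q| ≤ lam * ‖p - q‖ :=
    fun p hp => hlip p hp q hq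
  have hI : 0 ≤ ∫ p in Icc a (a + (s, s)), f p := setIntegral_nonneg measurableSet_Icc hf0
  have hdev := abs_sub_setIntegral_Icc_div_sq_le hs hlam.le hq hint hlipq
  have hcube := pow_three_abs_sub_div_sq_le hlam hs (hf0 q hq) hI hleaf
    (hdev.trans (by nlinarith)) fun t ht hts =>
      sq_mul_sub_le_setIntegral_Icc ht hts hlam.le hq hf0 hint hlipq
  have hρ : 0 ≤ ρ := hI.trans hleaf
  refine le_min (hdev.trans ?_) ?_
  · have : (3 : ℝ) / 4 ≤ 2 * Real.sqrt 2 / 3 := by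
      nlinarith [Real.sq_sqrt (zero_le_two (α := ℝ)), Real.sqrt_nonneg 2]
    gcongr
  · rw [one_div, Real.le_rpow_inv_iff_of_pos (abs_nonneg _) (by positivity) three_pos]
    exact_mod_cast hcube.trans (by nlinarith [sq_nonneg lam])

/-- Let `v` be a leaf cell (an axis-aligned square `R` of side length `s`)
of the volume-based quadtree of a `λ`-Lipschitz nonnegative function `f` with threshold `ρ`,
so that `∫_R f ≤ ρ`. With `f_T` taking on `R` the average value `(∫_R f)/s²`, we have
`|f(x,y) - f_T(x,y)| ≤ min((2√2/3)·λ·s, (6λ²ρ)^(1/3))` for all `(x,y) ∈ R`. -/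
theorem quadtree_cell_error_bound
    (lam s ρ : ℝ) (f : ℝ × ℝ → ℝ) (a q : ℝ × ℝ)
    (hlam : 0 < lam) (hs : 0 < s) (hρ : 0 < ρ)
    (R : Set (ℝ × ℝ)) (hR : R = Set.Icc a (a + (s, s)))
    (hf0 : ∀ p ∈ R, 0 ≤ f p)
    (hlip : ∀ p ∈ R, ∀ p' ∈ R, |f p - f p'| ≤ lam * ‖p - p'‖)
    (hint : IntegrableOn f R)
    (hleaf : (∫ p in R, f p) ≤ ρ)
    (hq : q ∈ R) :
    |f q - (∫ p in R, f p) / s ^ 2| ≤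
      min ((2 * Real.sqrt 2 / 3) * lam * s) ((6 * lam ^ 2 * ρ) ^ ((1:ℝ)/3)) :=
  quadtree_cell_error_bound_general lam s ρ f a q hlam hs R hR hf0 hlip hint hleaf hq
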